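/- arXiv:2011.10978 — 9 statements merged into one kernel-verified Lean document; each statement's English description precedes it below -/
import Mathlib

section
/- Let β₁ + p^{k₁}∗ and β₂ + p^{k₂}∗ be two distinct, non-nested representative roots in ℤ_{p^k} with k₁ ≤ k₂. Then for any a₁ ∈ β₁ + p^{k₁}∗ and a₂ ∈ β₂ + p^{k₂}∗, the p-adic valuation v_p(a₁ - a₂) equals v_p(β₁ - β₂). -/
/-! Write `a₁ - a₂ = (β₁ - β₂) + p ^ k₁ * c`, using `k₁ ≤ k₂`. Since `p ^ k₁` does not divide
`β₁ - β₂`, adding a multiple of `p ^ k₁` changes none of the divisibilities `p ^ m ∣ β₁ - β₂`: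
for `m ≤ k₁` the added term is divisible by `p ^ m`, and for `m ≥ k₁` neither side is. -/

theorem padicValInt_eq_of_forall_pow_dvd_iff {p : ℕ} (hp : p ≠ 1) {x y : ℤ} (hx : x ≠ 0)
    (hy : y ≠ 0) (h : ∀ m : ℕ, (p : ℤ) ^ m ∣ x ↔ (p : ℤ) ^ m ∣ y) :
    padicValInt p x = padicValInt p y := by
  have key : ∀ m : ℕ, m ≤ padicValInt p x ↔ m ≤ padicValInt p y := fun m => by
    simpa [padicValInt_dvd_iff_of_ne_one hp, hx, hy] using h m
  exact le_antisymm ((key _).1 le_rfl) ((key _).2 le_rfl)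

theorem padicValInt_add_eq_of_not_dvd_of_dvd {p n : ℕ} (hp : p ≠ 1) {a b : ℤ}
    (ha : ¬ (p : ℤ) ^ n ∣ a) (hb : (p : ℤ) ^ n ∣ b) :
    padicValInt p (a + b) = padicValInt p a := by
  have hdvd : ∀ m : ℕ, (p : ℤ) ^ m ∣ a + b ↔ (p : ℤ) ^ m ∣ a := by
    intro m
    rcases le_total m n with hmn | hnm
    · exact dvd_add_left ((pow_dvd_pow _ hmn).trans hb)
    · refine iff_of_false (fun hab => ha ?_) (fun ha' => ha ((pow_dvd_pow _ hnm).trans ha'))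
      exact (dvd_add_left hb).1 ((pow_dvd_pow _ hnm).trans hab)
  have ha0 : a ≠ 0 := by
    rintro rfl
    exact ha (dvd_zero _)
  have hab0 : a + b ≠ 0 := fun hab => ha ((hdvd n).1 (hab ▸ dvd_zero _))
  exact padicValInt_eq_of_forall_pow_dvd_iff hp hab0 ha0 hdvd

theorem valuation_of_difference_of_elements_of_rep_roots_general
    (p : ℕ) (hp : p.Prime) (k₁ k₂ : ℕ)
    (hkk : k₁ ≤ k₂) (β₁ β₂ : ℤ)
    (hnonnested : ¬ ((p : ℤ) ^ k₁ ∣ β₁ - β₂))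
    (y₁ y₂ : ℤ) :
    padicValInt p ((β₁ + (p : ℤ) ^ k₁ * y₁) - (β₂ + (p : ℤ) ^ k₂ * y₂)) =
      padicValInt p (β₁ - β₂) := by
  have hsplit : (β₁ + (p : ℤ) ^ k₁ * y₁) - (β₂ + (p : ℤ) ^ k₂ * y₂) =
      (β₁ - β₂) + (p : ℤ) ^ k₁ * (y₁ - (p : ℤ) ^ (k₂ - k₁) * y₂) := by
    rw [← Nat.add_sub_cancel' hkk, pow_add, Nat.add_sub_cancel_left]
    ring
  rw [hsplit]
  exact padicValInt_add_eq_of_not_dvd_of_dvd hp.ne_one hnonnested (dvd_mul_right _ _)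

theorem valuation_of_difference_of_elements_of_rep_roots
    (p : ℕ) (hp : p.Prime) (k k₁ k₂ : ℕ) (hk₁ : k₁ ≤ k) (hk₂ : k₂ ≤ k)
    (hkk : k₁ ≤ k₂) (β₁ β₂ : ℤ)
    (hnonnested : ¬ ((p : ℤ) ^ k₁ ∣ β₁ - β₂))
    (y₁ y₂ : ℤ) :
    padicValInt p ((β₁ + (p : ℤ) ^ k₁ * y₁) - (β₂ + (p : ℤ) ^ k₂ * y₂)) =
      padicValInt p (β₁ - β₂) :=
  valuation_of_difference_of_elements_of_rep_roots_general p hp k₁ k₂ hkk β₁ β₂ hnonnested y₁ y₂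
end

section
/- Any subset S ⊆ ℤ_{p^k} has a unique minimal representative-root representation: there is exactly one collection {β_i + p^{k_i}∗}_{i=1}^l of representative roots whose union is S, such that no representative root in the collection is contained in another, and for each i, the union over b ∈ {0,...,p-1} of (β_i + p^{k_i}∗) + b·p^{k_i - 1} is not contained in S. -/
/-- The representative root `β + p^j∗` as a subset of `ZMod (p^k)`. -/
def repRoot (p k : ℕ) (β : ZMod (p ^ k)) (j : ℕ) : Set (ZMod (p ^ k)) :=
  {x | ∃ y : ZMod (p ^ k), x = β + (p : ZMod (p ^ k)) ^ j * y}

/-- A set is a representative root if it is of the form `β + p^j∗` for some `β` and `j ≤ k`. -/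
def IsRepRoot (p k : ℕ) (r : Set (ZMod (p ^ k))) : Prop :=
  ∃ (β : ZMod (p ^ k)) (j : ℕ), j ≤ k ∧ r = repRoot p k β j

/-- `L` is a minimal representative-root representation of `S`:
(1) the members of `L` are representative roots whose union is `S`,
(2) no member is contained in another member,
(3) for each member `β + p^j∗` with `j ≥ 1`, the union over `b ∈ [p]` of the
    translates `(β + p^j∗) + b·p^(j-1)` is not contained in `S`. -/
def IsMinimalRep (p k : ℕ) (S : Set (ZMod (p ^ k))) (L : Set (Set (ZMod (p ^ k)))) : Prop :=
  (∀ r ∈ L, IsRepRoot p k r) ∧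
  (⋃₀ L = S) ∧
  (∀ r ∈ L, ∀ r' ∈ L, r ⊆ r' → r = r') ∧
  (∀ r ∈ L, ∀ (β : ZMod (p ^ k)) (j : ℕ), j ≤ k → r = repRoot p k β j → 1 ≤ j →
    ¬ (⋃ b ∈ Finset.range p, (fun x => x + (p : ZMod (p ^ k)) ^ (j - 1) * (b : ZMod (p ^ k))) '' r)
        ⊆ S)

/-!
Two representative roots that meet are nested, and the union in condition (3) is the next
coarser root `β + p^(j-1)∗`, which strictly contains `β + p^j∗`. So condition (3) says exactly
that a member is a maximal representative root inside `S`, and nestedness forces every maximal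
root inside `S` to be a member. The minimal representation is therefore the family of all maximal
representative roots inside `S`; it covers `S` because each singleton `{x} = x + p^k∗` is a
representative root and there are only finitely many of them.
-/

section RepRoot

variable {p k : ℕ}

lemma mem_repRoot_self (β : ZMod (p ^ k)) (j : ℕ) : β ∈ repRoot p k β j :=
  ⟨0, by ring⟩

lemma repRoot_antitone (β : ZMod (p ^ k)) : Antitone (repRoot p k β) := by
  intro j j' hjj' x ⟨y, hy⟩
  refine ⟨p ^ (j' - j) * y, ?_⟩
  rw [hy, ← mul_assoc, ← pow_add, Nat.add_sub_cancel' hjj']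

lemma repRoot_eq_of_mem {β x : ZMod (p ^ k)} {j : ℕ} (hx : x ∈ repRoot p k β j) :
    repRoot p k x j = repRoot p k β j := by
  obtain ⟨y, rfl⟩ := hx
  ext z
  constructor
  · rintro ⟨w, rfl⟩; exact ⟨y + w, by ring⟩
  · rintro ⟨w, rfl⟩; exact ⟨w - y, by ring⟩

lemma IsRepRoot.subset_or_subset {r r' : Set (ZMod (p ^ k))} (hr : IsRepRoot p k r)
    (hr' : IsRepRoot p k r') {x : ZMod (p ^ k)} (hx : x ∈ r) (hx' : x ∈ r') :
    r ⊆ r' ∨ r' ⊆ r := by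
  obtain ⟨β, j, -, rfl⟩ := hr
  obtain ⟨β', j', -, rfl⟩ := hr'
  rw [← repRoot_eq_of_mem hx, ← repRoot_eq_of_mem hx']
  exact (le_total j' j).imp (repRoot_antitone x ·) (repRoot_antitone x ·)

lemma natCast_pow_self_eq_zero (p k : ℕ) : (p : ZMod (p ^ k)) ^ k = 0 := by
  exact_mod_cast ZMod.natCast_self (p ^ k)

lemma isRepRoot_singleton (x : ZMod (p ^ k)) : IsRepRoot p k {x} := by
  refine ⟨x, k, le_rfl, ?_⟩
  ext z
  simp [repRoot, natCast_pow_self_eq_zero]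

lemma iUnion_translate_repRoot (hp : 0 < p) (β : ZMod (p ^ k)) {j : ℕ}
    (hj : 1 ≤ j) :
    (⋃ b ∈ Finset.range p,
        (fun x => x + (p : ZMod (p ^ k)) ^ (j - 1) * (b : ZMod (p ^ k))) '' repRoot p k β j)
      = repRoot p k β (j - 1) := by
  have : NeZero (p ^ k) := ⟨by positivity⟩
  have hpj : (p : ZMod (p ^ k)) ^ j = p ^ (j - 1) * p := by
    rw [← pow_succ, Nat.sub_add_cancel hj]
  ext z
  simp only [Set.mem_iUnion, Set.mem_image, Finset.mem_range]
  constructor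
  · rintro ⟨b, -, x, ⟨y, rfl⟩, rfl⟩
    exact ⟨p * y + b, by rw [hpj]; ring⟩
  · rintro ⟨y, rfl⟩
    -- the last base-`p` digit of `y` selects the translate
    refine ⟨y.val % p, Nat.mod_lt _ hp, β + (p : ZMod (p ^ k)) ^ j * (y.val / p : ℕ),
      ⟨(y.val / p : ℕ), rfl⟩, ?_⟩
    have hy : ((y.val % p + p * (y.val / p) : ℕ) : ZMod (p ^ k)) = y := by
      rw [Nat.mod_add_div, ZMod.natCast_zmod_val]
    push_cast at hy
    rw [hpj]
    linear_combination (p : ZMod (p ^ k)) ^ (j - 1) * hy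

/-- Reducing modulo `p^j` kills `β + p^j∗` but not `p^(j-1)`. -/
lemma add_pow_pred_notMem_repRoot (hp : 1 < p) {j : ℕ} (hj : 1 ≤ j) (hjk : j ≤ k)
    (β : ZMod (p ^ k)) : β + (p : ZMod (p ^ k)) ^ (j - 1) ∉ repRoot p k β j := by
  rintro ⟨y, hy⟩
  have h := congrArg (ZMod.castHom (pow_dvd_pow p hjk) (ZMod (p ^ j))) (add_left_cancel hy)
  simp only [map_mul, map_pow, map_natCast, natCast_pow_self_eq_zero, zero_mul] at h
  have hdvd : p ^ j ∣ p ^ (j - 1) := (ZMod.natCast_eq_zero_iff _ _).1 (by exact_mod_cast h)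
  have := (Nat.pow_dvd_pow_iff_le_right hp).1 hdvd
  omega

def maxRepRoots (p k : ℕ) (S : Set (ZMod (p ^ k))) : Set (Set (ZMod (p ^ k))) :=
  {r | Maximal (fun r => IsRepRoot p k r ∧ r ⊆ S) r}

lemma mem_maxRepRoots {S r : Set (ZMod (p ^ k))} :
    r ∈ maxRepRoots p k S ↔ Maximal (fun r => IsRepRoot p k r ∧ r ⊆ S) r :=
  Iff.rfl

lemma maximal_repRoot_of_parent_not_subset {S : Set (ZMod (p ^ k))} {β : ZMod (p ^ k)} {j : ℕ}
    (hjk : j ≤ k) (hS : repRoot p k β j ⊆ S) (hparent : 1 ≤ j → ¬ repRoot p k β (j - 1) ⊆ S) :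
    Maximal (fun r => IsRepRoot p k r ∧ r ⊆ S) (repRoot p k β j) := by
  refine ⟨⟨⟨β, j, hjk, rfl⟩, hS⟩, ?_⟩
  rintro r' ⟨⟨β', j', -, rfl⟩, hr'S⟩ hsub
  rw [← repRoot_eq_of_mem (hsub (mem_repRoot_self β j))] at hr'S ⊢
  rcases le_or_gt j j' with h | h
  · exact repRoot_antitone β h
  · exact absurd ((repRoot_antitone β (by omega)).trans hr'S) (hparent (by omega))

lemma parent_not_subset_of_maximal_repRoot (hp : 1 < p) {S : Set (ZMod (p ^ k))}
    {β : ZMod (p ^ k)} {j : ℕ} (hj : 1 ≤ j) (hjk : j ≤ k)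
    (hmax : Maximal (fun r => IsRepRoot p k r ∧ r ⊆ S) (repRoot p k β j)) :
    ¬ repRoot p k β (j - 1) ⊆ S := by
  intro hparent
  have heq := hmax.eq_of_subset ⟨⟨β, j - 1, by omega, rfl⟩, hparent⟩ (repRoot_antitone β (by omega))
  exact add_pow_pred_notMem_repRoot hp hj hjk β (heq ▸ ⟨1, by ring⟩)

lemma translates_not_subset_iff_maximal (hp : 1 < p) {S r : Set (ZMod (p ^ k))}
    (hr : IsRepRoot p k r) (hrS : r ⊆ S) :
    (∀ (β : ZMod (p ^ k)) (j : ℕ), j ≤ k → r = repRoot p k β j → 1 ≤ j →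
      ¬ (⋃ b ∈ Finset.range p,
          (fun x => x + (p : ZMod (p ^ k)) ^ (j - 1) * (b : ZMod (p ^ k))) '' r) ⊆ S) ↔
      Maximal (fun r => IsRepRoot p k r ∧ r ⊆ S) r := by
  constructor
  · intro h3
    obtain ⟨β, j, hjk, rfl⟩ := hr
    refine maximal_repRoot_of_parent_not_subset hjk hrS fun hj => ?_
    rw [← iUnion_translate_repRoot (by omega) β hj]
    exact h3 β j hjk rfl hj
  · rintro hmax β j hjk rfl hj
    rw [iUnion_translate_repRoot (by omega) β hj]
    exact parent_not_subset_of_maximal_repRoot hp hj hjk hmax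

lemma sUnion_maxRepRoots (hp : 0 < p) (S : Set (ZMod (p ^ k))) :
    ⋃₀ maxRepRoots p k S = S := by
  have : NeZero (p ^ k) := ⟨by positivity⟩
  refine Set.Subset.antisymm (Set.sUnion_subset fun _ hr => (mem_maxRepRoots.1 hr).prop.2)
    fun x hx => ?_
  obtain ⟨r, hxr, hmax⟩ := Finite.exists_le_maximal
    (p := fun r => IsRepRoot p k r ∧ r ⊆ S) ⟨isRepRoot_singleton x, Set.singleton_subset_iff.2 hx⟩
  exact ⟨r, hmax, hxr rfl⟩

theorem isMinimalRep_iff (hp : 1 < p) {S : Set (ZMod (p ^ k))} {L : Set (Set (ZMod (p ^ k)))} :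
    IsMinimalRep p k S L ↔ L = maxRepRoots p k S := by
  constructor
  · rintro ⟨hrep, rfl, -, h3⟩
    have hsub : L ⊆ maxRepRoots p k (⋃₀ L) := fun r hr =>
      (translates_not_subset_iff_maximal hp (hrep r hr) (Set.subset_sUnion_of_mem hr)).1 (h3 r hr)
    refine Set.Subset.antisymm hsub fun r hr => ?_
    rw [mem_maxRepRoots] at hr
    obtain ⟨β, j, -, rfl⟩ := hr.prop.1
    obtain ⟨r₀, hr₀L, hβr₀⟩ := hr.prop.2 (mem_repRoot_self β j)
    have hr₀ := mem_maxRepRoots.1 (hsub hr₀L)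
    rcases hr.prop.1.subset_or_subset hr₀.prop.1 (mem_repRoot_self β j) hβr₀ with h | h
    · rwa [hr.eq_of_subset hr₀.prop h]
    · rwa [← hr₀.eq_of_subset hr.prop h]
  · rintro rfl
    refine ⟨fun r hr => (mem_maxRepRoots.1 hr).prop.1, sUnion_maxRepRoots (by omega) S,
      fun r hr r' hr' h => (setOfPred_maximal_antichain _).eq hr hr' h, fun r hr => ?_⟩
    rw [mem_maxRepRoots] at hr
    exact (translates_not_subset_iff_maximal hp hr.prop.1 hr.prop.2).2 hr

end RepRoot

theorem minimal_rep_unique_general (p k : ℕ) (hp : p.Prime)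
    (S : Set (ZMod (p ^ k))) :
    ∃! L : Set (Set (ZMod (p ^ k))), IsMinimalRep p k S L :=
  ⟨maxRepRoots p k S, (isMinimalRep_iff hp.one_lt).2 rfl,
    fun _ hL => (isMinimalRep_iff hp.one_lt).1 hL⟩

theorem minimal_rep_unique (p k : ℕ) (hp : p.Prime) (hk : 1 ≤ k)
    (S : Set (ZMod (p ^ k))) :
    ∃! L : Set (Set (ZMod (p ^ k))), IsMinimalRep p k S L :=
  minimal_rep_unique_general p k hp S
end

section
/- Let S ⊆ ℤ be finite with a p-ordering, and let v_p(S, i) denote the i-th term of the associated p-sequence valuation (the p-adic valuation of ∏_{j<i}(a_i - a_j)). Then for any x ∈ ℤ: v_p(x·S, i) = v_p(S, i) + i·v_p(x), and v_p(S + x, i) = v_p(S, i). -/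
/-- `a` is a `p`-ordering of the finite set `S ⊆ ℤ`: the first `S.card` terms of `a`
enumerate `S` without repetition, and each `a i` minimizes the `p`-adic valuation of the
product of its differences with the previously chosen elements, among the remaining
elements of `S`. -/
def IsPOrdering (p : ℕ) (S : Finset ℤ) (a : ℕ → ℤ) : Prop :=
  (∀ i < S.card, a i ∈ S) ∧
  (∀ i < S.card, ∀ j < S.card, a i = a j → i = j) ∧
  (∀ i, 0 < i → i < S.card → ∀ x ∈ S, (∀ j < i, x ≠ a j) →
    padicValInt p (∏ j ∈ Finset.range i, (a i - a j)) ≤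
      padicValInt p (∏ j ∈ Finset.range i, (x - a j)))

/-! Bhargava's argument. If `a` is a `p`-ordering of `S`, then `a 0, …, a (n-1)` form a test
set: a polynomial of degree `< n` whose values at these points are divisible by `p ^ e` has all
its values on `S` divisible by `p ^ e` (peel off the top Newton term `c ∏_{j<n} (X - a j)`; by the
minimality of `a n`, `p ^ e ∣ c ∏_{j<n} (a n - a j)` propagates to every `s ∈ S`). Applied to
`f - ∏_{j<k} (X - a j)` for a monic `f` of degree `k`, it shows that `p ^ e ∣ ∏_{j<k} (a k - a j)`
whenever `p ^ e` divides all values of `f` on `S`; with `f = ∏_{j<k} (X - b j)` for a second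
`p`-ordering `b` this gives that `v_p(S, k)` does not depend on the ordering.

A map `φ` with `φ y - φ z = u (y - z)` multiplies each product `∏_{j<i} (y - a j)` by `u ^ i`,
so it carries `p`-orderings of `S` to `p`-orderings of `S.image φ`, shifting `v_p(·, i)` by
`i v_p(u)`; scaling and translation are the cases `u = x` and `u = 1`. -/

open Finset Polynomial

theorem padicValInt_pow {p : ℕ} [Fact p.Prime] (x : ℤ) (n : ℕ) :
    padicValInt p (x ^ n) = n * padicValInt p x := by
  simp [padicValInt, Int.natAbs_pow]

theorem dvd_mul_of_padicValInt_le {p : ℕ} [Fact p.Prime] {c y z : ℤ} {e : ℕ} (hy : y ≠ 0)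
    (hyz : padicValInt p y ≤ padicValInt p z) (h : (p : ℤ) ^ e ∣ c * y) :
    (p : ℤ) ^ e ∣ c * z := by
  rcases eq_or_ne c 0 with rfl | hc
  · simp
  rcases eq_or_ne z 0 with rfl | hz
  · simp
  rw [padicValInt_dvd_iff] at h ⊢
  refine Or.inr ?_
  rcases h with h | h
  · exact absurd h (mul_ne_zero hc hy)
  rw [padicValInt.mul hc hy] at h
  rw [padicValInt.mul hc hz]
  omega

theorem eval_prod_X_sub_C (a : ℕ → ℤ) (n : ℕ) (y : ℤ) :
    (∏ j ∈ range n, (X - C (a j))).eval y = ∏ j ∈ range n, (y - a j) := by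
  simp [eval_prod]

section AffineMap

variable {φ : ℤ → ℤ} {u : ℤ}

theorem injective_of_sub_eq (hu : u ≠ 0) (hφ : ∀ y z, φ y - φ z = u * (y - z)) :
    Function.Injective φ := fun y z h => by
  simpa [sub_eq_zero, hu] using (hφ y z).symm.trans (sub_eq_zero.2 h)

theorem prod_range_sub_of_sub_eq (hφ : ∀ y z, φ y - φ z = u * (y - z)) (a : ℕ → ℤ) (i : ℕ)
    (y : ℤ) : ∏ j ∈ range i, (φ y - φ (a j)) = u ^ i * ∏ j ∈ range i, (y - a j) := by
  simp_rw [hφ, prod_mul_distrib, prod_const, card_range]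

theorem padicValInt_prod_range_sub_of_sub_eq {p : ℕ} [Fact p.Prime] (hu : u ≠ 0)
    (hφ : ∀ y z, φ y - φ z = u * (y - z)) {a : ℕ → ℤ} {i : ℕ} {y : ℤ}
    (h : ∏ j ∈ range i, (y - a j) ≠ 0) :
    padicValInt p (∏ j ∈ range i, (φ y - φ (a j))) =
      padicValInt p (∏ j ∈ range i, (y - a j)) + i * padicValInt p u := by
  rw [prod_range_sub_of_sub_eq hφ, padicValInt.mul (pow_ne_zero _ hu) h, padicValInt_pow, add_comm]

end AffineMap

namespace IsPOrdering

variable {p : ℕ} {S : Finset ℤ} {a : ℕ → ℤ}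

theorem prod_sub_ne_zero (ha : IsPOrdering p S a) {i : ℕ} (hi : i < S.card) :
    ∏ j ∈ range i, (a i - a j) ≠ 0 :=
  prod_ne_zero_iff.2 fun j hj => sub_ne_zero.2 fun h =>
    (mem_range.1 hj).ne' (ha.2.1 i hi j ((mem_range.1 hj).trans hi) h)

theorem padicValInt_prod_sub_le (ha : IsPOrdering p S a) {i : ℕ} (hi : i < S.card)
    {s : ℤ} (hs : s ∈ S) (hne : ∏ j ∈ range i, (s - a j) ≠ 0) :
    padicValInt p (∏ j ∈ range i, (a i - a j)) ≤ padicValInt p (∏ j ∈ range i, (s - a j)) := by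
  rcases Nat.eq_zero_or_pos i with rfl | hipos
  · simp
  refine ha.2.2 i hipos hi s hs fun j hj hsj => hne (prod_eq_zero (mem_range.2 hj) ?_)
  rw [hsj, sub_self]

theorem dvd_mul_prod_sub [Fact p.Prime] (ha : IsPOrdering p S a) {i : ℕ} (hi : i < S.card)
    {c : ℤ} {e : ℕ} (h : (p : ℤ) ^ e ∣ c * ∏ j ∈ range i, (a i - a j)) {s : ℤ} (hs : s ∈ S) :
    (p : ℤ) ^ e ∣ c * ∏ j ∈ range i, (s - a j) := by
  by_cases hne : ∏ j ∈ range i, (s - a j) = 0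
  · simp [hne]
  exact dvd_mul_of_padicValInt_le (ha.prod_sub_ne_zero hi) (ha.padicValInt_prod_sub_le hi hs hne) h

theorem dvd_eval_of_dvd_eval_lt [Fact p.Prime] (ha : IsPOrdering p S a) {e n : ℕ}
    (hn : n ≤ S.card) {g : ℤ[X]} (hg : g.degree < n)
    (hdvd : ∀ i < n, (p : ℤ) ^ e ∣ g.eval (a i)) {s : ℤ} (hs : s ∈ S) :
    (p : ℤ) ^ e ∣ g.eval s := by
  induction n generalizing g s with
  | zero => simp [degree_eq_bot.1 (Nat.WithBot.lt_zero_iff.1 (by exact_mod_cast hg))]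
  | succ n ih =>
    set P : ℤ[X] := ∏ j ∈ range n, (X - C (a j))
    have hPmonic : P.Monic := monic_prod_of_monic _ _ fun j _ => monic_X_sub_C (a j)
    have hPdeg : P.natDegree = n := by
      rw [natDegree_finsetProd_X_sub_C_eq_card, card_range]
    set r := g - C (g.coeff n) * P
    have hr : r.degree < n := by
      refine (degree_lt_iff_coeff_zero _ _).2 fun m hm => ?_
      rcases hm.eq_or_lt with rfl | hm
      · simp [r, ← hPdeg, hPmonic.coeff_natDegree]
      · have hgm := (degree_lt_iff_coeff_zero _ _).1 hg m (by omega)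
        simp [r, hgm, coeff_eq_zero_of_natDegree_lt (hPdeg ▸ hm : P.natDegree < m)]
    have hr_eval : ∀ y, r.eval y = g.eval y - g.coeff n * ∏ j ∈ range n, (y - a j) := fun y => by
      simp only [r, P, eval_sub, eval_mul, eval_C, eval_prod_X_sub_C]
    have hr_dvd : ∀ t ∈ S, (p : ℤ) ^ e ∣ r.eval t := fun t ht => by
      refine ih (by omega) hr (fun i hi => ?_) ht
      rw [hr_eval, prod_eq_zero (mem_range.2 hi) (sub_self _), mul_zero, sub_zero]
      exact hdvd i (by omega)
    have htop : (p : ℤ) ^ e ∣ g.coeff n * ∏ j ∈ range n, (a n - a j) := by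
      have := dvd_sub (hdvd n n.lt_succ_self) (hr_dvd (a n) (ha.1 n (by omega)))
      rwa [hr_eval, sub_sub_cancel] at this
    have := dvd_add (hr_dvd s hs) (ha.dvd_mul_prod_sub (by omega) htop hs)
    rwa [hr_eval, sub_add_cancel] at this

theorem dvd_prod_sub_of_dvd_eval [Fact p.Prime] (ha : IsPOrdering p S a) {k : ℕ}
    (hk : k < S.card) {f : ℤ[X]} (hf : f.Monic) (hfk : f.natDegree = k) {e : ℕ}
    (hdvd : ∀ s ∈ S, (p : ℤ) ^ e ∣ f.eval s) :
    (p : ℤ) ^ e ∣ ∏ j ∈ range k, (a k - a j) := by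
  set P : ℤ[X] := ∏ j ∈ range k, (X - C (a j))
  have hPmonic : P.Monic := monic_prod_of_monic _ _ fun j _ => monic_X_sub_C (a j)
  have hPdeg : P.natDegree = k := by
    rw [natDegree_finsetProd_X_sub_C_eq_card, card_range]
  have hdeg : (f - P).degree < k := by
    have := degree_sub_lt_left (p := f) (q := P)
      (by rw [degree_eq_natDegree hf.ne_zero, degree_eq_natDegree hPmonic.ne_zero, hfk, hPdeg])
      hf.ne_zero (by rw [hf.leadingCoeff, hPmonic.leadingCoeff])
    rwa [degree_eq_natDegree hf.ne_zero, hfk] at this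
  have hrest := ha.dvd_eval_of_dvd_eval_lt hk.le hdeg (fun i hi => by
    rw [eval_sub, eval_prod_X_sub_C, prod_eq_zero (mem_range.2 hi) (sub_self _), sub_zero]
    exact hdvd _ (ha.1 i (hi.trans hk))) (ha.1 k hk)
  have := dvd_sub (hdvd _ (ha.1 k hk)) hrest
  rwa [eval_sub, sub_sub_cancel, eval_prod_X_sub_C] at this

theorem padicValInt_prod_sub_le_of_isPOrdering [Fact p.Prime] (ha : IsPOrdering p S a)
    {b : ℕ → ℤ} (hb : IsPOrdering p S b) {k : ℕ} (hk : k < S.card) :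
    padicValInt p (∏ j ∈ range k, (b k - b j)) ≤ padicValInt p (∏ j ∈ range k, (a k - a j)) := by
  have hdvd : (p : ℤ) ^ padicValInt p (∏ j ∈ range k, (b k - b j)) ∣
      ∏ j ∈ range k, (a k - a j) := by
    refine ha.dvd_prod_sub_of_dvd_eval hk (monic_prod_of_monic _ _ fun j _ => monic_X_sub_C (b j))
      (by rw [natDegree_finsetProd_X_sub_C_eq_card, card_range]) fun s hs => ?_
    rw [eval_prod_X_sub_C]
    by_cases hne : ∏ j ∈ range k, (s - b j) = 0
    · simp [hne]
    exact (pow_dvd_pow _ (hb.padicValInt_prod_sub_le hk hs hne)).trans (padicValInt_dvd _)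
  rcases (padicValInt_dvd_iff _ _).1 hdvd with h | h
  · exact absurd h (ha.prod_sub_ne_zero hk)
  · exact h

theorem padicValInt_prod_sub_eq [Fact p.Prime] (ha : IsPOrdering p S a) {b : ℕ → ℤ}
    (hb : IsPOrdering p S b) {k : ℕ} (hk : k < S.card) :
    padicValInt p (∏ j ∈ range k, (b k - b j)) = padicValInt p (∏ j ∈ range k, (a k - a j)) :=
  le_antisymm (ha.padicValInt_prod_sub_le_of_isPOrdering hb hk)
    (hb.padicValInt_prod_sub_le_of_isPOrdering ha hk)

theorem image_of_sub_eq [Fact p.Prime] (ha : IsPOrdering p S a) {φ : ℤ → ℤ} {u : ℤ}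
    (hu : u ≠ 0) (hφ : ∀ y z, φ y - φ z = u * (y - z)) :
    IsPOrdering p (S.image φ) (fun j => φ (a j)) := by
  have hinj := injective_of_sub_eq hu hφ
  rw [IsPOrdering, card_image_of_injective _ hinj]
  refine ⟨fun i hi => mem_image_of_mem φ (ha.1 i hi),
    fun i hi j hj h => ha.2.1 i hi j hj (hinj h), fun i hipos hi y hy hy_ne => ?_⟩
  obtain ⟨s, hs, rfl⟩ := mem_image.1 hy
  have hs_ne : ∀ j < i, s ≠ a j := fun j hj h => hy_ne j hj (congrArg φ h)
  have hprod_ne : ∏ j ∈ range i, (s - a j) ≠ 0 :=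
    prod_ne_zero_iff.2 fun j hj => sub_ne_zero.2 (hs_ne j (mem_range.1 hj))
  rw [padicValInt_prod_range_sub_of_sub_eq hu hφ (ha.prod_sub_ne_zero hi),
    padicValInt_prod_range_sub_of_sub_eq hu hφ hprod_ne]
  exact Nat.add_le_add_right (ha.2.2 i hipos hi s hs hs_ne) _

end IsPOrdering

theorem pSequence_scale_and_translate (p : ℕ) (hp : p.Prime) (S : Finset ℤ)
    (x : ℤ) (a b c : ℕ → ℤ)
    (ha : IsPOrdering p S a)
    (hb : IsPOrdering p (S.image (fun s => x * s)) b)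
    (hc : IsPOrdering p (S.image (fun s => s + x)) c) :
    (∀ i < (S.image (fun s => x * s)).card,
      padicValInt p (∏ j ∈ Finset.range i, (b i - b j)) =
        padicValInt p (∏ j ∈ Finset.range i, (a i - a j)) + i * padicValInt p x) ∧
    (∀ i < S.card,
      padicValInt p (∏ j ∈ Finset.range i, (c i - c j)) =
        padicValInt p (∏ j ∈ Finset.range i, (a i - a j))) := by
  have := Fact.mk hp
  refine ⟨fun i hi => ?_, fun i hi => ?_⟩
  · rcases eq_or_ne x 0 with rfl | hx
    · have : (S.image fun s => (0 : ℤ) * s).card ≤ 1 := card_le_one.2 (by simp)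
      obtain rfl : i = 0 := by omega
      simp
    have hscale : ∀ y z, x * y - x * z = x * (y - z) := fun y z => by ring
    have hcard := card_image_of_injective S (injective_of_sub_eq hx hscale)
    rw [(ha.image_of_sub_eq hx hscale).padicValInt_prod_sub_eq hb hi,
      padicValInt_prod_range_sub_of_sub_eq hx hscale (ha.prod_sub_ne_zero (hcard ▸ hi))]
  · have htrans : ∀ y z, (y + x) - (z + x) = 1 * (y - z) := fun y z => by ring
    have hcard := card_image_of_injective S (injective_of_sub_eq one_ne_zero htrans)
    rw [(ha.image_of_sub_eq one_ne_zero htrans).padicValInt_prod_sub_eq hc (hcard ▸ hi),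
      padicValInt_prod_range_sub_of_sub_eq one_ne_zero htrans (ha.prod_sub_ne_zero hi),
      padicValInt.one, mul_zero, add_zero]
end

section
/- The natural numbers 0, 1, 2, 3, ... in increasing order form a p-ordering of ℤ (or of {0,1,...,n-1} for any n), and the associated p-sequence is v_p(ℤ, i) = v_p(i!). -/
open Finset Polynomial

theorem padicValInt_le_of_dvd {p : ℕ} {a b : ℤ} (hab : a ∣ b) (hb : b ≠ 0) :
    padicValInt p a ≤ padicValInt p b := by
  rcases eq_or_ne p 1 with rfl | hp
  · simp [padicValInt]
  · exact ((padicValInt_dvd_iff_of_ne_one hp _ b).mp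
      ((padicValInt_dvd a).trans hab)).resolve_left hb

theorem prod_range_natCast_sub_natCast {R : Type*} [CommRing R] (i : ℕ) :
    ∏ j ∈ range i, ((i : R) - j) = i.factorial := by
  rw [← descPochhammer_eval_eq_prod_range, descPochhammer_eval_eq_descFactorial,
    Nat.descFactorial_self]

theorem factorial_dvd_prod_range_sub_natCast {R : Type*} [CommRing R] [BinomialRing R]
    (i : ℕ) (x : R) : (i.factorial : R) ∣ ∏ j ∈ range i, (x - j) := by
  rw [← descPochhammer_eval_eq_prod_range, ← descPochhammer_map (Int.castRingHom R), eval_map,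
    Subsingleton.elim (Int.castRingHom R) RingHom.smulOneHom, eval₂_smulOneHom_eq_smeval,
    Ring.descPochhammer_eq_factorial_smul_choose, nsmul_eq_mul]
  exact dvd_mul_right _ _

theorem isPOrdering_natCast (p n : ℕ) :
    IsPOrdering p ((range n).image (fun i : ℕ => (i : ℤ))) (fun i : ℕ => (i : ℤ)) := by
  have hcard : ((range n).image (fun i : ℕ => (i : ℤ))).card = n :=
    (card_image_of_injective _ Nat.cast_injective).trans (card_range n)
  rw [IsPOrdering, hcard]
  refine ⟨fun i hi => mem_image_of_mem _ (mem_range.mpr hi),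
    fun i _ j _ h => Nat.cast_injective h, fun i _ _ x _ hx => ?_⟩
  rw [prod_range_natCast_sub_natCast]
  refine padicValInt_le_of_dvd (factorial_dvd_prod_range_sub_natCast i x) ?_
  exact prod_ne_zero_iff.mpr fun j hj => sub_ne_zero.mpr (hx j (mem_range.mp hj))

theorem naturals_pOrdering_factorial_general (p : ℕ) (n : ℕ) :
    IsPOrdering p ((Finset.range n).image (fun i : ℕ => (i : ℤ))) (fun i : ℕ => (i : ℤ)) ∧
    (∀ i < n,
      padicValInt p (∏ j ∈ Finset.range i, ((i : ℤ) - (j : ℤ))) =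
        padicValInt p (Nat.factorial i : ℤ)) :=
  ⟨isPOrdering_natCast p n, fun i _ => by rw [prod_range_natCast_sub_natCast]⟩

theorem naturals_pOrdering_factorial (p : ℕ) (hp : p.Prime) (n : ℕ) :
    IsPOrdering p ((Finset.range n).image (fun i : ℕ => (i : ℤ))) (fun i : ℕ => (i : ℤ)) ∧
    (∀ i < n,
      padicValInt p (∏ j ∈ Finset.range i, ((i : ℤ) - (j : ℤ))) =
        padicValInt p (Nat.factorial i : ℤ)) :=
  naturals_pOrdering_factorial_general p n
end

section
/- Let (a₀, a₁, ...) be a p-ordering of ℤ_{p^{k-j}} (viewed as integers {0,...,p^{k-j}-1}). Then (β + a₀·p^j, β + a₁·p^j, β + a₂·p^j, ...) is a p-ordering of the representative root β + p^j∗ = {β + p^j y | y ∈ ℤ_{p^{k-j}}}. -/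
/-!
The map `x ↦ β + c * x` multiplies the product of the `i` differences at step `i` by `c ^ i`
(here `c = p ^ j`), so at every step the valuations of all candidates shift by the same
amount `i * v_p(c)` and the minimizers are carried along.
-/

open Finset

section AffineImage

variable {p : ℕ} [Fact p.Prime]

lemma padicValInt_prod_affine_sub (β c z : ℤ) (b : ℕ → ℤ) (i : ℕ) (hc : c ≠ 0)
    (hz : ∀ l < i, z ≠ b l) :
    padicValInt p (∏ l ∈ range i, ((β + c * z) - (β + c * b l))) =
      i * padicValInt p c + padicValInt p (∏ l ∈ range i, (z - b l)) := by
  have hprod : ∏ l ∈ range i, ((β + c * z) - (β + c * b l)) =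
      c ^ i * ∏ l ∈ range i, (z - b l) := by
    rw [← card_range i, ← prod_const, card_range, ← prod_mul_distrib]
    exact prod_congr rfl fun l _ => by ring
  have hne : ∏ l ∈ range i, (z - b l) ≠ 0 :=
    prod_ne_zero_iff.mpr fun l hl => sub_ne_zero_of_ne (hz l (mem_range.mp hl))
  rw [hprod, padicValInt.mul (pow_ne_zero _ hc) hne]
  simp only [padicValInt, Int.natAbs_pow, padicValNat.pow]

theorem IsPOrdering.image_affine {S : Finset ℤ} {a : ℕ → ℤ} (h : IsPOrdering p S a)
    (β c : ℤ) (hc : c ≠ 0) :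
    IsPOrdering p (S.image fun x => β + c * x) fun i => β + c * a i := by
  obtain ⟨hmem, hinj, hmin⟩ := h
  have hf : Function.Injective fun x : ℤ => β + c * x :=
    fun x y hxy => mul_left_cancel₀ hc (add_left_cancel hxy)
  rw [IsPOrdering, card_image_of_injective S hf]
  refine ⟨fun i hi => mem_image_of_mem _ (hmem i hi),
    fun i hi l hl hil => hinj i hi l hl (hf hil), ?_⟩
  rintro i hi₀ hi _ hx hx_new
  obtain ⟨y, hy, rfl⟩ := mem_image.mp hx
  have hy_new : ∀ l < i, y ≠ a l := fun l hl hyl => hx_new l hl (by rw [hyl])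
  have hai_new : ∀ l < i, a i ≠ a l := fun l hl hil =>
    (hinj i hi l (hl.trans hi) hil ▸ hl).false
  rw [padicValInt_prod_affine_sub β c _ a i hc hai_new,
    padicValInt_prod_affine_sub β c _ a i hc hy_new]
  exact Nat.add_le_add_left (hmin i hi₀ hi y hy hy_new) _

end AffineImage

theorem pOrdering_repRoot_general (p : ℕ) (hp : p.Prime) (k j : ℕ) (β : ℤ)
    (a : ℕ → ℤ)
    (ha : IsPOrdering p ((Finset.range (p ^ (k - j))).image (fun y : ℕ => (y : ℤ))) a) :
    IsPOrdering p
      ((Finset.range (p ^ (k - j))).image (fun y : ℕ => β + (p : ℤ) ^ j * (y : ℤ)))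
      (fun i => β + (p : ℤ) ^ j * a i) := by
  have : Fact p.Prime := ⟨hp⟩
  have hpj : (p : ℤ) ^ j ≠ 0 := pow_ne_zero _ (Int.natCast_ne_zero.mpr hp.ne_zero)
  simpa only [image_image, Function.comp_def] using ha.image_affine β _ hpj

theorem pOrdering_repRoot (p : ℕ) (hp : p.Prime) (k j : ℕ) (hj : j ≤ k) (β : ℤ)
    (a : ℕ → ℤ)
    (ha : IsPOrdering p ((Finset.range (p ^ (k - j))).image (fun y : ℕ => (y : ℤ))) a) :
    IsPOrdering p
      ((Finset.range (p ^ (k - j))).image (fun y : ℕ => β + (p : ℤ) ^ j * (y : ℤ)))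
      (fun i => β + (p : ℤ) ^ j * a i) :=
  pOrdering_repRoot_general p hp k j β a ha
end

section
/- Let p be a prime with k < p, and let f ∈ ℤ_{p^k}[x]. Suppose α₀, ..., α_{k-1} are roots of f in ℤ_{p^k} all congruent to j mod p, and pairwise incongruent mod p² (i.e., for i ≠ l, α_i - α_l ≢ 0 mod p²). Then every element of ℤ_{p^k} congruent to j mod p is a root of f. -/
/-!
Write `α i = j + p * β i` and `g(X) = f(j + p X)`. The coefficient of `X^m` in `g` is divisible by
`p^m`, so `g` has degree `< k` because `p^k = 0`. Since the `α i` are pairwise incongruent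
mod `p²`, the `β i` are pairwise incongruent mod `p`, so their differences are units; the
Vandermonde determinant at the `β i` is then a unit and `g`, which vanishes at `k` such points,
is zero. Hence `f(j + p y) = g(y) = 0` for every `y`.
-/

namespace Polynomial

variable {R : Type*} [CommRing R]

theorem eq_zero_of_degree_lt_of_eval_eq_zero_of_isUnit_sub {n : ℕ} {f : R[X]} {v : Fin n → R}
    (hv : Pairwise fun i l => IsUnit (v i - v l)) (hdeg : f.degree < n)
    (heval : ∀ i, f.eval (v i) = 0) : f = 0 := by
  rw [← mem_degreeLT] at hdeg
  have hdet : IsUnit (Matrix.vandermonde v).det := by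
    simp only [Matrix.det_vandermonde, IsUnit.prod_iff, Finset.mem_univ, Finset.mem_Ioi,
      true_implies]
    exact fun i l hil => hv hil.ne'
  rw [← degreeLTEquiv_eq_zero_iff_eq_zero hdeg]
  refine Matrix.mulVec_injective_of_det_mem_nonZeroDivisors hdet.mem_nonZeroDivisors ?_
  ext i
  simpa [Matrix.mulVec, dotProduct, eval_eq_sum_degreeLTEquiv hdeg, mul_comm] using heval i

theorem coeff_comp_C_mul_X_add_C (f : R[X]) (a j : R) (m : ℕ) :
    (f.comp (C a * X + C j)).coeff m = (taylor j f).coeff m * a ^ m := by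
  rw [taylor_apply, ← comp_C_mul_X_coeff, comp_assoc, add_comp, X_comp, C_comp]

theorem degree_comp_C_mul_X_add_C_lt {n : ℕ} {a : R} (ha : a ^ n = 0) (f : R[X]) (j : R) :
    (f.comp (C a * X + C j)).degree < n := by
  rw [degree_lt_iff_coeff_zero]
  intro m hm
  rw [coeff_comp_C_mul_X_add_C, pow_eq_zero_of_le hm ha, mul_zero]

theorem eval_add_mul_eq_zero_of_pow_eq_zero {n : ℕ} {a : R} (ha : a ^ n = 0) {f : R[X]} {j : R}
    {v : Fin n → R} (hv : Pairwise fun i l => IsUnit (v i - v l))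
    (hroots : ∀ i, f.eval (j + a * v i) = 0) (y : R) : f.eval (j + a * y) = 0 := by
  have hg : f.comp (C a * X + C j) = 0 :=
    eq_zero_of_degree_lt_of_eval_eq_zero_of_isUnit_sub hv (degree_comp_C_mul_X_add_C_lt ha f j)
      fun i => by simpa [add_comm] using hroots i
  simpa [add_comm] using congr_arg (eval y) hg

end Polynomial

theorem ZMod.isUnit_of_not_natCast_dvd {p k : ℕ} (hp : p.Prime) {d : ZMod (p ^ k)}
    (h : ¬ (p : ZMod (p ^ k)) ∣ d) : IsUnit d := by
  have : NeZero (p ^ k) := ⟨pow_ne_zero k hp.ne_zero⟩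
  have hval : ¬ p ∣ d.val := fun hdvd => h <| by
    simpa using (Nat.cast_dvd_cast hdvd : (p : ZMod (p ^ k)) ∣ (d.val : ZMod (p ^ k)))
  rw [← ZMod.natCast_zmod_val d, ZMod.isUnit_iff_coprime]
  exact (Nat.coprime_comm.mp (hp.coprime_iff_not_dvd.mpr hval)).pow_right k

theorem roots_in_k_residue_classes_give_full_class_general
    (p k : ℕ) (hp : p.Prime)
    (f : Polynomial (ZMod (p ^ k))) (j : ZMod (p ^ k)) (α : Fin k → ZMod (p ^ k))
    (hroots : ∀ i, f.eval (α i) = 0)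
    (hcong : ∀ i, (p : ZMod (p ^ k)) ∣ (α i - j))
    (hpair : ∀ i l, i ≠ l → ¬ ((p : ZMod (p ^ k)) ^ 2 ∣ (α i - α l))) :
    ∀ x : ZMod (p ^ k), (p : ZMod (p ^ k)) ∣ (x - j) → f.eval x = 0 := by
  choose β hβ using hcong
  have hα : ∀ i, α i = j + p * β i := fun i => eq_add_of_sub_eq' (hβ i)
  have hβ_sub : Pairwise fun i l => IsUnit (β i - β l) := fun i l hil =>
    ZMod.isUnit_of_not_natCast_dvd hp fun ⟨c, hc⟩ =>
      hpair i l hil ⟨c, by rw [hα i, hα l]; linear_combination (p : ZMod (p ^ k)) * hc⟩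
  have hpk : (p : ZMod (p ^ k)) ^ k = 0 := by rw [← Nat.cast_pow, ZMod.natCast_self]
  rintro x ⟨y, hy⟩
  rw [eq_add_of_sub_eq' hy]
  exact Polynomial.eval_add_mul_eq_zero_of_pow_eq_zero hpk hβ_sub (fun i => hα i ▸ hroots i) y

theorem roots_in_k_residue_classes_give_full_class
    (p k : ℕ) (hp : p.Prime) (hk : 1 ≤ k) (hkp : k < p)
    (f : Polynomial (ZMod (p ^ k))) (j : ZMod (p ^ k)) (α : Fin k → ZMod (p ^ k))
    (hroots : ∀ i, f.eval (α i) = 0)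
    (hcong : ∀ i, (p : ZMod (p ^ k)) ∣ (α i - j))
    (hpair : ∀ i l, i ≠ l → ¬ ((p : ZMod (p ^ k)) ^ 2 ∣ (α i - α l))) :
    ∀ x : ZMod (p ^ k), (p : ZMod (p ^ k)) ∣ (x - j) → f.eval x = 0 :=
  roots_in_k_residue_classes_give_full_class_general p k hp f j α hroots hcong hpair
end

section
/- For a prime p > 2, the root-sets in ℤ_{p²} contained in a fixed residue class j mod p are exactly: the empty set, any singleton {j + pα} for α ∈ {0,...,p-1}, and the full class {j + pα | α ∈ {0,...,p-1}}. In particular there are exactly p + 2 of them. -/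
/-!
Put `π = p` in `ℤ/p²`: `π` is prime, `π² = 0`, and `π x = 0` exactly when `π ∣ x`. Since
`(π s)² = 0`, Taylor's formula stops after the linear term: `f (a + π s) = f a + π s f' a`.
If `a` and `a + π t` (with `π ∤ t`) are both roots, then `π t f' a = 0`, so `π ∣ f' a` and `f`
vanishes on the whole class of `a`. Hence a root set inside one class is empty, a singleton
(`X - a`) or the whole class (`(X - j)²`). The class has `p` elements because multiplication by
`π` has kernel and image both equal to `(π)`, so `|(π)|² = p²`.
-/

/-- `R` is a root set in the ring `R'` if some polynomial has exactly `R` as its set of roots. -/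
def IsRootSet {R' : Type*} [CommRing R'] (R : Set R') : Prop :=
  ∃ f : Polynomial R', ∀ x : R', f.eval x = 0 ↔ x ∈ R

open Polynomial

theorem Set.ncard_insert_empty_insert_image_singleton {α : Type*} {C : Set α}
    (hC : C.Finite) (hC' : C.Nontrivial) :
    (insert ∅ (insert C ((fun x => ({x} : Set α)) '' C))).ncard = C.ncard + 2 := by
  have hCsingle : C ∉ (fun x => ({x} : Set α)) '' C := by
    rintro ⟨x, -, hx⟩
    exact hC'.ne_singleton hx.symm
  have hempty : ∅ ∉ insert C ((fun x => ({x} : Set α)) '' C) := by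
    rintro (h | ⟨x, -, hx⟩)
    · exact hC'.nonempty.ne_empty h.symm
    · exact Set.singleton_ne_empty x hx
  rw [Set.ncard_insert_of_notMem hempty ((hC.image _).insert C),
    Set.ncard_insert_of_notMem hCsingle (hC.image _),
    Set.ncard_image_of_injective _ Set.singleton_injective]

section SquareZeroPrime

variable {R : Type*} [CommRing R] {π : R}

theorem sq_eq_zero_iff_dvd_of_prime (hπ : Prime π) (hann : ∀ x, π * x = 0 ↔ π ∣ x) (y : R) :
    y ^ 2 = 0 ↔ π ∣ y := by
  refine ⟨fun hy => hπ.dvd_of_dvd_pow (hy ▸ dvd_zero π), ?_⟩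
  rintro ⟨c, rfl⟩
  rw [mul_pow, sq, (hann π).2 dvd_rfl, zero_mul]

theorem eval_eq_zero_of_two_roots_dvd_sub (hπ : Prime π) (hann : ∀ x, π * x = 0 ↔ π ∣ x)
    {f : R[X]} {a b x : R} (ha : f.eval a = 0) (hb : f.eval b = 0) (hab : a ≠ b)
    (hba : π ∣ b - a) (hxa : π ∣ x - a) : f.eval x = 0 := by
  have eval_add_mul (s : R) : f.eval (a + π * s) = π * (f.derivative.eval a * s) := by
    have hsq : (π * s) ^ 2 = 0 := (sq_eq_zero_iff_dvd_of_prime hπ hann _).2 (dvd_mul_right π s)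
    rw [f.eval_add_of_sq_eq_zero a _ hsq, ha]
    ring
  obtain ⟨t, ht⟩ := hba
  have hπt : ¬ π ∣ t := fun hπt =>
    hab (by rw [← sub_eq_zero, ← neg_sub, ht, (hann t).2 hπt, neg_zero])
  have hderiv : π * f.derivative.eval a = 0 := by
    refine (hann _).2 ((hπ.dvd_or_dvd ((hann _).1 ?_)).resolve_right hπt)
    rw [← eval_add_mul, ← ht, add_sub_cancel, hb]
  obtain ⟨s, hs⟩ := hxa
  rw [← add_sub_cancel a x, hs, eval_add_mul, ← mul_assoc, hderiv, zero_mul]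

theorem isRootSet_iff_of_subset_setOf_dvd_sub (hπ : Prime π) (hann : ∀ x, π * x = 0 ↔ π ∣ x)
    {j : R} {S : Set R} (hS : S ⊆ {x | π ∣ x - j}) :
    IsRootSet S ↔ S = ∅ ∨ (∃ α, S = {j + π * α}) ∨ S = {x | π ∣ x - j} := by
  constructor
  · rintro ⟨f, hf⟩
    rcases S.eq_empty_or_nonempty with hempty | ⟨a, haS⟩
    · exact Or.inl hempty
    obtain ⟨α, hα⟩ := hS haS
    rcases S.subsingleton_or_nontrivial with hsub | hnontriv
    · refine Or.inr (Or.inl ⟨α, ?_⟩)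
      rw [hsub.eq_singleton_of_mem haS, ← hα, add_sub_cancel]
    obtain ⟨b, hbS, hba⟩ := hnontriv.exists_ne a
    refine Or.inr (Or.inr (hS.antisymm fun x hx => (hf x).1 ?_))
    have hdvd {y} (hy : π ∣ y - j) : π ∣ y - a := by
      simpa using dvd_sub hy (hS haS)
    exact eval_eq_zero_of_two_roots_dvd_sub hπ hann ((hf a).2 haS) ((hf b).2 hbS) hba.symm
      (hdvd (hS hbS)) (hdvd hx)
  · rintro (rfl | ⟨α, rfl⟩ | rfl)
    · have : Nontrivial R := nontrivial_of_ne π 0 hπ.ne_zero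
      exact ⟨1, by simp⟩
    · exact ⟨X - C (j + π * α), by simp [sub_eq_zero]⟩
    · exact ⟨(X - C j) ^ 2, fun x => by simpa using sq_eq_zero_iff_dvd_of_prime hπ hann (x - j)⟩

theorem setOf_subset_isRootSet_eq (hπ : Prime π) (hann : ∀ x, π * x = 0 ↔ π ∣ x) (j : R) :
    {S : Set R | S ⊆ {x | π ∣ x - j} ∧ IsRootSet S} =
      insert ∅ (insert {x | π ∣ x - j} ((fun x => ({x} : Set R)) '' {x | π ∣ x - j})) := by
  ext S
  simp only [Set.mem_ofPred_eq, Set.mem_insert_iff, Set.mem_image]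
  constructor
  · rintro ⟨hS, hroot⟩
    rcases (isRootSet_iff_of_subset_setOf_dvd_sub hπ hann hS).1 hroot with h | ⟨α, rfl⟩ | h
    · exact Or.inl h
    · exact Or.inr (Or.inr ⟨_, by simp, rfl⟩)
    · exact Or.inr (Or.inl h)
  · have key {S : Set R} (hS : S ⊆ {x | π ∣ x - j}) (h : S = ∅ ∨ (∃ α, S = {j + π * α}) ∨
        S = {x | π ∣ x - j}) : S ⊆ {x | π ∣ x - j} ∧ IsRootSet S :=
      ⟨hS, (isRootSet_iff_of_subset_setOf_dvd_sub hπ hann hS).2 h⟩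
    rintro (rfl | rfl | ⟨x, ⟨α, hα⟩, rfl⟩)
    · exact key (Set.empty_subset _) (Or.inl rfl)
    · exact key subset_rfl (Or.inr (Or.inr rfl))
    · rw [sub_eq_iff_eq_add'] at hα
      exact key (by simp [hα]) (Or.inr (Or.inl ⟨α, by rw [hα]⟩))

theorem ncard_setOf_dvd_sub (π j : R) : {x | π ∣ x - j}.ncard = {x | π ∣ x}.ncard := by
  rw [← Set.ncard_image_of_injective {x | π ∣ x} (add_left_injective j)]
  congr 1
  ext x
  simp [← sub_eq_add_neg]

theorem ncard_setOf_dvd_sq [Finite R] (hann : ∀ x, π * x = 0 ↔ π ∣ x) :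
    {x : R | π ∣ x}.ncard ^ 2 = Nat.card R := by
  set f := AddMonoidHom.mulLeft π
  have hker : {x | π ∣ x} = (f.ker : Set R) := Set.ext fun x => (hann x).symm
  have hrange : {x | π ∣ x} = (f.range : Set R) := by
    ext x
    simp [f, dvd_def, eq_comm]
  rw [← f.ker.card_mul_index, AddSubgroup.index_ker, sq]
  nth_rw 1 [hker]
  rw [hrange]
  rfl

theorem nontrivial_setOf_dvd_sub (hπ : π ≠ 0) (j : R) : {x | π ∣ x - j}.Nontrivial :=
  ⟨j, by simp, j + π, by simp, left_ne_add.2 hπ⟩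

end SquareZeroPrime

namespace ZMod

variable {p : ℕ} [NeZero p]

theorem natCast_dvd_iff_dvd_val (y : ZMod (p ^ 2)) : (p : ZMod (p ^ 2)) ∣ y ↔ p ∣ y.val := by
  have hp : p ∣ p ^ 2 := dvd_pow_self p two_ne_zero
  constructor
  · rintro ⟨c, rfl⟩
    rw [val_mul, Nat.dvd_mod_iff hp, val_natCast]
    exact ((Nat.dvd_mod_iff hp).2 dvd_rfl).mul_right _
  · rintro ⟨m, hm⟩
    exact ⟨m, by rw [← natCast_zmod_val y, hm, Nat.cast_mul]⟩

theorem natCast_mul_eq_zero_iff (x : ZMod (p ^ 2)) :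
    (p : ZMod (p ^ 2)) * x = 0 ↔ (p : ZMod (p ^ 2)) ∣ x := by
  have hcancel (n : ℕ) : p ^ 2 ∣ p * n ↔ p ∣ n := by
    rw [sq, Nat.mul_dvd_mul_iff_left (NeZero.pos p)]
  conv_lhs => rw [← natCast_zmod_val x]
  rw [← Nat.cast_mul, natCast_eq_zero_iff, hcancel, natCast_dvd_iff_dvd_val]

theorem prime_natCast (hp : p.Prime) : Prime (p : ZMod (p ^ 2)) := by
  have hp2 : p ∣ p ^ 2 := dvd_pow_self p two_ne_zero
  have hne : (p : ZMod (p ^ 2)) ≠ 0 := by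
    rw [Ne, natCast_eq_zero_iff, ← pow_one p, ← pow_mul, Nat.pow_dvd_pow_iff_le_right hp.one_lt]
    omega
  refine ⟨hne, fun hu => hne ?_, fun a b hab => ?_⟩
  · exact hu.mul_left_eq_zero.1 ((natCast_mul_eq_zero_iff _).2 dvd_rfl)
  · simp only [natCast_dvd_iff_dvd_val, val_mul, Nat.dvd_mod_iff hp2] at hab ⊢
    exact hp.dvd_mul.1 hab

theorem ncard_setOf_natCast_dvd : {x : ZMod (p ^ 2) | (p : ZMod (p ^ 2)) ∣ x}.ncard = p :=
  Nat.pow_left_injective two_ne_zero <| by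
    dsimp only
    rw [ncard_setOf_dvd_sq natCast_mul_eq_zero_iff, Nat.card_zmod]

end ZMod

theorem rootSets_in_class_Zp2_general (p : ℕ) (hp : p.Prime) (j : ZMod (p ^ 2)) :
    (∀ R : Set (ZMod (p ^ 2)), R ⊆ {x | (p : ZMod (p ^ 2)) ∣ (x - j)} →
      (IsRootSet R ↔
        (R = ∅ ∨
         (∃ α : ZMod (p ^ 2), R = {j + (p : ZMod (p ^ 2)) * α}) ∨
         R = {x | (p : ZMod (p ^ 2)) ∣ (x - j)}))) ∧
    Set.ncard {R : Set (ZMod (p ^ 2)) |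
        R ⊆ {x | (p : ZMod (p ^ 2)) ∣ (x - j)} ∧ IsRootSet R} = p + 2 := by
  have : NeZero p := ⟨hp.ne_zero⟩
  have hπ := ZMod.prime_natCast hp
  have hann := ZMod.natCast_mul_eq_zero_iff (p := p)
  refine ⟨fun S hS => isRootSet_iff_of_subset_setOf_dvd_sub hπ hann hS, ?_⟩
  rw [setOf_subset_isRootSet_eq hπ hann, Set.ncard_insert_empty_insert_image_singleton
    (Set.toFinite _) (nontrivial_setOf_dvd_sub hπ.ne_zero j), ncard_setOf_dvd_sub,
    ZMod.ncard_setOf_natCast_dvd]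

theorem rootSets_in_class_Zp2 (p : ℕ) (hp : p.Prime) (hp2 : 2 < p) (j : ZMod (p ^ 2)) :
    (∀ R : Set (ZMod (p ^ 2)), R ⊆ {x | (p : ZMod (p ^ 2)) ∣ (x - j)} →
      (IsRootSet R ↔
        (R = ∅ ∨
         (∃ α : ZMod (p ^ 2), R = {j + (p : ZMod (p ^ 2)) * α}) ∨
         R = {x | (p : ZMod (p ^ 2)) ∣ (x - j)}))) ∧
    Set.ncard {R : Set (ZMod (p ^ 2)) |
        R ⊆ {x | (p : ZMod (p ^ 2)) ∣ (x - j)} ∧ IsRootSet R} = p + 2 :=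
  rootSets_in_class_Zp2_general p hp j
end

section
/- For a prime p > 3, the number of root-sets of ℤ_{p³} contained in a fixed residue class mod p is (3p² + p + 4)/2. -/
/-!
Write the points of the class of `j` as `j + p y`. Since `p³ = 0`, Taylor expansion at `j` gives
`f (j + p y) = c₀ + c₁ p y + c₂ p² y²`. If `c₁` is a unit, two roots `j + p y`, `j + p y'` satisfy
`p (y - y') (c₁ + c₂ p (y + y')) = 0` with a unit second factor, so there is at most one root.
Otherwise `c₁ = p s`, and once there is a root `j + p y₁`, `f (j + p y) = p² (g y - g y₁)` with
`g y = s y + c₂ y²`; this vanishes iff the reduction of `g - g y₁` mod `p` vanishes at `y mod p`.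
So the roots form the union of the sets `j + p α + p² ℤ` over the roots `α ∈ 𝔽_p` of a quadratic:
all of `𝔽_p`, or at most two of them. Conversely every such union, and every singleton, is a root
set. The unions are pairwise distinct and never singletons, which gives `p²` singletons and
`1 + p + C(p, 2) + 1` unions.
-/

open Polynomial Finset

namespace ZMod

def residue (p n : ℕ) [NeZero n] : ZMod (p ^ n) →+* ZMod p :=
  castHom (dvd_pow_self p (NeZero.ne n)) _

variable {p n : ℕ}

theorem natCast_pow_self : (p : ZMod (p ^ n)) ^ n = 0 := by
  rw [← Nat.cast_pow, natCast_self]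

variable [NeZero n]

@[simp]
theorem residue_natCast (m : ℕ) : residue p n m = m :=
  map_natCast _ m

theorem residue_surjective : Function.Surjective (residue p n) :=
  castHom_surjective _

variable [Fact p.Prime]

theorem residue_eq_zero_iff {z : ZMod (p ^ n)} : residue p n z = 0 ↔ p ∣ z.val := by
  rw [← natCast_zmod_val z, residue_natCast, natCast_eq_zero_iff, val_natCast_of_lt (val_lt z)]

theorem natCast_dvd_iff_residue_eq_zero {z : ZMod (p ^ n)} :
    (p : ZMod (p ^ n)) ∣ z ↔ residue p n z = 0 := by
  refine ⟨fun ⟨w, hw⟩ => by simp [hw], fun h => ?_⟩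
  obtain ⟨k, hk⟩ := residue_eq_zero_iff.1 h
  exact ⟨k, by rw [← natCast_zmod_val z, hk, Nat.cast_mul]⟩

theorem isUnit_of_residue_ne_zero {z : ZMod (p ^ n)} (h : residue p n z ≠ 0) : IsUnit z := by
  rw [← natCast_zmod_val z, isUnit_natCast_iff_not_dvd_pow Fact.out (Nat.pos_of_neZero n)]
  exact mt residue_eq_zero_iff.2 h

theorem natCast_pow_mul_eq_zero_iff {k : ℕ} (hk : k + 1 = n) {z : ZMod (p ^ n)} :
    (p : ZMod (p ^ n)) ^ k * z = 0 ↔ residue p n z = 0 := by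
  subst hk
  refine ⟨fun h => ?_, fun h => ?_⟩
  · rw [← natCast_zmod_val z, ← Nat.cast_pow, ← Nat.cast_mul, natCast_eq_zero_iff] at h
    exact residue_eq_zero_iff.2
      (Nat.dvd_of_mul_dvd_mul_left (pow_pos (Nat.Prime.pos Fact.out) k) (by rwa [← pow_succ]))
  · obtain ⟨w, rfl⟩ := natCast_dvd_iff_residue_eq_zero.2 h
    rw [← mul_assoc, ← pow_succ, natCast_pow_self, zero_mul]

theorem ncard_setOf_residue_eq_zero {k : ℕ} :
    {z : ZMod (p ^ (k + 1)) | residue p (k + 1) z = 0}.ncard = p ^ k := by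
  let f := (residue p (k + 1)).toAddMonoidHom
  have hrange : Nat.card f.range = p := by
    rw [AddMonoidHom.range_eq_top.2 residue_surjective, AddSubgroup.card_top, Nat.card_zmod]
  have h := f.ker.card_mul_index
  rw [AddSubgroup.index_ker, hrange, Nat.card_zmod] at h
  exact Nat.eq_of_mul_eq_mul_right (Nat.Prime.pos Fact.out) (h.trans (pow_succ p k))

end ZMod

theorem Polynomial.eval_eq_sum_range_of_pow_eq_zero {R : Type*} [CommSemiring R] (f : R[X])
    {h : R} {n : ℕ} (hn : h ^ n = 0) : f.eval h = ∑ i ∈ range n, f.coeff i * h ^ i := by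
  rw [eval_eq_sum_range' (n := n + (f.natDegree + 1)) (by omega), sum_range_add]
  simp [pow_add, hn]

theorem Polynomial.card_filter_isRoot_le_or_eq_univ {F : Type*} [CommRing F] [IsDomain F]
    [Fintype F] [DecidableEq F] (q : F[X]) :
    #{α | q.IsRoot α} ≤ q.natDegree ∨ ({α | q.IsRoot α} : Finset F) = univ := by
  by_cases hq : q = 0
  · simp [hq]
  · refine Or.inl (card_le_degree_of_subset_roots fun α hα => ?_)
    simp only [mem_val, mem_filter] at hα
    exact (mem_roots hq).2 hα.2

namespace Finset

variable {α : Type*} [Fintype α]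

theorem ncard_setOf_card_le (m : ℕ) :
    {S : Finset α | #S ≤ m}.ncard = ∑ k ∈ range (m + 1), (Fintype.card α).choose k := by
  rw [Set.ncard_eq_toFinset_card', Set.toFinset_ofPred,
    card_eq_sum_card_fiberwise (f := card) (t := range (m + 1)) fun S hS => by
      simpa [Nat.lt_succ_iff] using hS]
  refine sum_congr rfl fun k hk => ?_
  rw [← card_univ, ← card_powersetCard, powersetCard_eq_filter, filter_filter]
  congr 1
  ext S
  simp only [mem_range, Order.lt_add_one_iff, mem_filter, mem_univ, true_and, powerset_univ,
    univ_filter_card_eq, mem_powersetCard, subset_univ, and_iff_right_iff_imp] at hk ⊢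
  omega

theorem ncard_setOf_card_le_two_or_eq_univ (h : 2 < Fintype.card α) :
    {S : Finset α | #S ≤ 2 ∨ S = univ}.ncard =
      2 + Fintype.card α + (Fintype.card α).choose 2 := by
  have huniv : (univ : Finset α) ∉ {S : Finset α | #S ≤ 2} := by simpa using h
  rw [show {S : Finset α | #S ≤ 2 ∨ S = univ} = insert univ {S | #S ≤ 2} by ext; simp [or_comm],
    Set.ncard_insert_of_notMem huniv, ncard_setOf_card_le]
  simp only [sum_range_succ, range_one, sum_singleton, Nat.choose_zero_right,
    Nat.choose_one_right]
  ring

end Finset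

theorem isRootSet_singleton {A : Type*} [CommRing A] (a : A) : IsRootSet {a} :=
  ⟨X - C a, fun x => by simp [sub_eq_zero]⟩

theorem isRootSet_empty {A : Type*} [CommRing A] [Nontrivial A] : IsRootSet (∅ : Set A) :=
  ⟨1, fun x => by simp⟩

open ZMod

section

variable {p : ℕ}

/-- The union of the sets `j + p α + p² ℤ` over `α ∈ S`; the point `j + p y` lies in the set of
`α` iff `y ≡ α mod p`. -/
def classUnion (j : ZMod (p ^ 3)) (S : Finset (ZMod p)) : Set (ZMod (p ^ 3)) :=
  {x | ∃ y, x = j + (p : ZMod (p ^ 3)) * y ∧ residue p 3 y ∈ S}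

variable {j : ZMod (p ^ 3)}

@[simp]
theorem classUnion_empty : classUnion j ∅ = ∅ := by
  simp [classUnion]

variable [Fact p.Prime]

theorem classUnion_univ : classUnion j univ = {x | (p : ZMod (p ^ 3)) ∣ x - j} := by
  ext x
  constructor
  · rintro ⟨y, rfl, -⟩
    exact ⟨y, by ring⟩
  · rintro ⟨y, hy⟩
    exact ⟨y, (sub_eq_iff_eq_add').1 hy, mem_univ _⟩

theorem residue_eq_of_natCast_mul_eq {y y' : ZMod (p ^ 3)}
    (h : (p : ZMod (p ^ 3)) * y = (p : ZMod (p ^ 3)) * y') : residue p 3 y = residue p 3 y' := by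
  rw [← sub_eq_zero, ← map_sub, ← natCast_pow_mul_eq_zero_iff (k := 2) rfl, pow_two, mul_assoc,
    mul_sub, h, sub_self, mul_zero]

theorem classUnion_subset_classUnion_iff {S T : Finset (ZMod p)} :
    classUnion j S ⊆ classUnion j T ↔ S ⊆ T := by
  refine ⟨fun h α hα => ?_, fun h x ⟨y, hx, hy⟩ => ⟨y, hx, h hy⟩⟩
  obtain ⟨y, rfl⟩ := residue_surjective (n := 3) α
  obtain ⟨y', hyy', hy'⟩ := h ⟨y, rfl, hα⟩
  rwa [residue_eq_of_natCast_mul_eq (add_left_cancel hyy')]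

theorem classUnion_injective : Function.Injective (classUnion (p := p) j) := fun _ _ h =>
  (classUnion_subset_classUnion_iff.1 h.le).antisymm (classUnion_subset_classUnion_iff.1 h.ge)

theorem classUnion_ne_singleton (S : Finset (ZMod p)) (x : ZMod (p ^ 3)) :
    classUnion j S ≠ {x} := by
  intro h
  obtain ⟨y, rfl, hy⟩ : x ∈ classUnion j S := h ▸ rfl
  have hmem : j + (p : ZMod (p ^ 3)) * (y + p) ∈ classUnion j S := ⟨y + p, rfl, by simpa using hy⟩
  rw [h, Set.mem_singleton_iff] at hmem
  have hp2 : (p : ZMod (p ^ 3)) ^ 2 * 1 = 0 := by linear_combination hmem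
  rw [natCast_pow_mul_eq_zero_iff rfl, map_one] at hp2
  exact one_ne_zero hp2

theorem ncard_classUnion_univ : (classUnion j univ).ncard = p ^ 2 := by
  have himage : classUnion j univ = (j + ·) '' {z | residue p 3 z = 0} := by
    ext x
    simp [classUnion_univ, Set.image_add_left, natCast_dvd_iff_residue_eq_zero, neg_add_eq_sub]
  rw [himage, Set.ncard_image_of_injective _ (add_right_injective j), ncard_setOf_residue_eq_zero]

theorem isRootSet_classUnion_univ : IsRootSet (classUnion j univ) :=
  ⟨C ((p : ZMod (p ^ 3)) ^ 2) * (X - C j), fun x => by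
    simp [classUnion_univ, natCast_pow_mul_eq_zero_iff rfl, natCast_dvd_iff_residue_eq_zero]⟩

theorem isRootSet_classUnion_pair (α β : ZMod p) : IsRootSet (classUnion j {α, β}) := by
  obtain ⟨a, rfl⟩ := residue_surjective (n := 3) α
  obtain ⟨b, rfl⟩ := residue_surjective (n := 3) β
  refine ⟨(X - C (j + p * a)) * (X - C (j + p * b)), fun x => ?_⟩
  simp only [eval_mul, eval_sub, eval_X, eval_C]
  constructor
  · intro h
    have hres : residue p 3 (x - j) = 0 := by
      simpa using congrArg (residue p 3) h
    obtain ⟨y, hy⟩ := natCast_dvd_iff_residue_eq_zero.2 hres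
    rw [(sub_eq_iff_eq_add').1 hy] at h ⊢
    have h' : (p : ZMod (p ^ 3)) ^ 2 * ((y - a) * (y - b)) = 0 := by linear_combination h
    rw [natCast_pow_mul_eq_zero_iff rfl, map_mul, mul_eq_zero, map_sub, map_sub, sub_eq_zero,
      sub_eq_zero] at h'
    exact ⟨y, rfl, by simpa using h'⟩
  · rintro ⟨y, rfl, hy⟩
    rw [mem_insert, mem_singleton] at hy
    rcases hy with hy | hy
    · obtain ⟨w, hw⟩ := natCast_dvd_iff_residue_eq_zero.2 (by rw [map_sub, hy, sub_self] :
        residue p 3 (y - a) = 0)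
      linear_combination (p * p * (y - b)) * hw + (w * (y - b)) * natCast_pow_self (p := p) (n := 3)
    · obtain ⟨w, hw⟩ := natCast_dvd_iff_residue_eq_zero.2 (by rw [map_sub, hy, sub_self] :
        residue p 3 (y - b) = 0)
      linear_combination (p * p * (y - a)) * hw + (w * (y - a)) * natCast_pow_self (p := p) (n := 3)

theorem isRootSet_classUnion {S : Finset (ZMod p)} (hS : #S ≤ 2 ∨ S = univ) :
    IsRootSet (classUnion j S) := by
  rcases hS with hS | rfl
  · interval_cases h : #S
    · have : Fact (1 < p ^ 3) := ⟨Nat.one_lt_pow three_ne_zero (Fact.out : p.Prime).one_lt⟩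
      rw [card_eq_zero.1 h, classUnion_empty]
      exact isRootSet_empty
    · obtain ⟨α, rfl⟩ := card_eq_one.1 h
      simpa using isRootSet_classUnion_pair (j := j) α α
    · obtain ⟨α, β, -, rfl⟩ := card_eq_two.1 h
      exact isRootSet_classUnion_pair α β
  · exact isRootSet_classUnion_univ

theorem natCast_mul_eq_of_quadratic_eq {c₀ c₁ c₂ y y' : ZMod (p ^ 3)}
    (hc₁ : residue p 3 c₁ ≠ 0)
    (h : c₀ + c₁ * ((p : ZMod (p ^ 3)) * y) + c₂ * ((p : ZMod (p ^ 3)) * y) ^ 2 =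
      c₀ + c₁ * ((p : ZMod (p ^ 3)) * y') + c₂ * ((p : ZMod (p ^ 3)) * y') ^ 2) :
    (p : ZMod (p ^ 3)) * y = (p : ZMod (p ^ 3)) * y' := by
  have hunit : IsUnit (c₁ + c₂ * (p : ZMod (p ^ 3)) * (y + y')) :=
    isUnit_of_residue_ne_zero (by simpa using hc₁)
  rw [← sub_eq_zero, ← hunit.mul_left_eq_zero]
  linear_combination h

theorem exists_isRoot_iff_of_quadratic_eq_zero {c₀ c₁ c₂ y₁ : ZMod (p ^ 3)}
    (hc₁ : residue p 3 c₁ = 0)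
    (hy₁ : c₀ + c₁ * ((p : ZMod (p ^ 3)) * y₁) + c₂ * ((p : ZMod (p ^ 3)) * y₁) ^ 2 = 0) :
    ∃ q : (ZMod p)[X], q.natDegree ≤ 2 ∧ ∀ y : ZMod (p ^ 3),
      c₀ + c₁ * ((p : ZMod (p ^ 3)) * y) + c₂ * ((p : ZMod (p ^ 3)) * y) ^ 2 = 0 ↔
        q.IsRoot (residue p 3 y) := by
  obtain ⟨s, rfl⟩ := natCast_dvd_iff_residue_eq_zero.2 hc₁
  let g : ZMod (p ^ 3) → ZMod (p ^ 3) := fun y => s * y + c₂ * y ^ 2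
  let q : (ZMod p)[X] :=
    C (residue p 3 c₂) * X ^ 2 + C (residue p 3 s) * X + C (-residue p 3 (g y₁))
  refine ⟨q, natDegree_quadratic_le, fun y => ?_⟩
  have hshift : c₀ + (p : ZMod (p ^ 3)) * s * ((p : ZMod (p ^ 3)) * y) +
      c₂ * ((p : ZMod (p ^ 3)) * y) ^ 2 = (p : ZMod (p ^ 3)) ^ 2 * (g y - g y₁) := by
    linear_combination hy₁
  have heval : q.eval (residue p 3 y) = residue p 3 (g y - g y₁) := by
    simp only [q, eval_add, eval_mul, eval_pow, eval_C, eval_X]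
    simp only [g, map_sub, map_add, map_mul, map_pow]
    ring
  rw [hshift, natCast_pow_mul_eq_zero_iff rfl, IsRoot.def, heval]

theorem eq_classUnion_of_forall_mem_iff {R : Set (ZMod (p ^ 3))} (hR : R ⊆ classUnion j univ)
    {q : (ZMod p)[X]} (h : ∀ y, j + (p : ZMod (p ^ 3)) * y ∈ R ↔ q.IsRoot (residue p 3 y)) :
    R = classUnion j {α | q.IsRoot α} := by
  ext x
  constructor
  · intro hx
    obtain ⟨y, rfl, -⟩ := hR hx
    exact ⟨y, rfl, by simpa using (h y).1 hx⟩
  · rintro ⟨y, rfl, hy⟩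
    exact (h y).2 (by simpa using hy)

theorem eq_singleton_or_eq_classUnion_of_isRootSet {R : Set (ZMod (p ^ 3))}
    (hR : R ⊆ classUnion j univ) (hroot : IsRootSet R) :
    (∃ x, R = {x}) ∨ ∃ S : Finset (ZMod p), (#S ≤ 2 ∨ S = univ) ∧ R = classUnion j S := by
  obtain ⟨f, hf⟩ := hroot
  set t := taylor j f with ht
  have hmem : ∀ y, j + (p : ZMod (p ^ 3)) * y ∈ R ↔
      t.coeff 0 + t.coeff 1 * ((p : ZMod (p ^ 3)) * y) + t.coeff 2 * ((p : ZMod (p ^ 3)) * y) ^ 2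
        = 0 := fun y => by
    have hcube : ((p : ZMod (p ^ 3)) * y) ^ 3 = 0 := by rw [mul_pow, natCast_pow_self, zero_mul]
    rw [← hf, add_comm, ← taylor_eval, eval_eq_sum_range_of_pow_eq_zero _ hcube]
    simp only [← ht, sum_range_succ, sum_range_zero, zero_add, pow_zero, mul_one, pow_one]
  by_cases hc₁ : residue p 3 (t.coeff 1) = 0
  · rcases R.eq_empty_or_nonempty with rfl | ⟨x₁, hx₁⟩
    · exact Or.inr ⟨∅, by simp, classUnion_empty.symm⟩
    obtain ⟨y₁, rfl, -⟩ := hR hx₁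
    obtain ⟨q, hq, hroots⟩ := exists_isRoot_iff_of_quadratic_eq_zero hc₁ ((hmem y₁).1 hx₁)
    refine Or.inr ⟨_, ?_, eq_classUnion_of_forall_mem_iff hR fun y => (hmem y).trans (hroots y)⟩
    exact (card_filter_isRoot_le_or_eq_univ q).imp_left (·.trans hq)
  · have hsub : R.Subsingleton := by
      intro x hx x' hx'
      obtain ⟨y, rfl, -⟩ := hR hx
      obtain ⟨y', rfl, -⟩ := hR hx'
      rw [natCast_mul_eq_of_quadratic_eq hc₁ (((hmem y).1 hx).trans ((hmem y').1 hx').symm)]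
    rcases hsub.eq_empty_or_singleton with rfl | h
    · exact Or.inr ⟨∅, by simp, classUnion_empty.symm⟩
    · exact Or.inl h

theorem setOf_isRootSet_subset_classUnion_univ :
    {R | R ⊆ classUnion j univ ∧ IsRootSet R} =
      (fun x => {x}) '' classUnion j univ ∪ classUnion j '' {S | #S ≤ 2 ∨ S = univ} := by
  ext R
  constructor
  · rintro ⟨hR, hroot⟩
    rcases eq_singleton_or_eq_classUnion_of_isRootSet hR hroot with ⟨x, rfl⟩ | ⟨S, hS, rfl⟩
    · exact Or.inl ⟨x, Set.singleton_subset_iff.1 hR, rfl⟩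
    · exact Or.inr ⟨S, hS, rfl⟩
  · rintro (⟨x, hx, rfl⟩ | ⟨S, hS, rfl⟩)
    · exact ⟨Set.singleton_subset_iff.2 hx, isRootSet_singleton x⟩
    · exact ⟨classUnion_subset_classUnion_iff.2 (subset_univ S), isRootSet_classUnion hS⟩

end

theorem count_rootSets_in_class_Zp3 (p : ℕ) (hp : p.Prime) (hp3 : 3 < p)
    (j : ZMod (p ^ 3)) :
    Set.ncard {R : Set (ZMod (p ^ 3)) |
        R ⊆ {x | (p : ZMod (p ^ 3)) ∣ (x - j)} ∧ IsRootSet R} =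
      (3 * p ^ 2 + p + 4) / 2 := by
  have : Fact p.Prime := ⟨hp⟩
  have hdisj : Disjoint ((fun x => {x}) '' classUnion j univ)
      (classUnion j '' {S : Finset (ZMod p) | #S ≤ 2 ∨ S = univ}) := by
    rw [Set.disjoint_left]
    rintro _ ⟨x, -, rfl⟩ ⟨S, -, hS⟩
    exact classUnion_ne_singleton S x hS
  rw [← classUnion_univ, setOf_isRootSet_subset_classUnion_univ,
    Set.ncard_union_eq hdisj (Set.toFinite _) (Set.toFinite _),
    Set.ncard_image_of_injective _ Set.singleton_injective,
    Set.ncard_image_of_injective _ classUnion_injective, ncard_classUnion_univ,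
    ncard_setOf_card_le_two_or_eq_univ (by rw [ZMod.card]; omega), ZMod.card,
    Nat.choose_two_right]
  obtain ⟨c, hc⟩ := Nat.even_mul_pred_self p
  have hsq : p ^ 2 = p * (p - 1) + p := by
    rw [sq, Nat.mul_sub_one, Nat.sub_add_cancel (Nat.le_mul_self p)]
  omega
end

section
/- Let S₁, ..., S_m be disjoint finite subsets of ℤ such that all elements within each S_i are congruent mod p, elements of distinct S_i are incongruent mod p, and let S = S₁ ∪ ... ∪ S_m. A sequence enumerating S is a p-ordering of S if and only if, for each i, its subsequence of elements of S_i is a p-ordering of S_i and at each step the chosen element has minimal p-value among the next unchosen elements of all the S_i's (where the p-value of x at a step is v_p of the product of differences of x with all previously chosen elements). In particular, merging given p-orderings of the S_i by repeatedly selecting the head with minimal current p-value yields a valid p-ordering of S. -/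
/-! If `x ∈ S i` and `a` lies in another class, then `x - a` is prime to `p`; so the `p`-value
of `x` after choosing `A` equals its `p`-value after choosing only `A.filter (· ∈ S i)`
(`pValue_filter`). A step of the merged sequence is therefore minimal among all remaining
elements iff it is minimal among the heads of the classes, and the head of `S i` is minimal
within `S i` iff that is a step of a `p`-ordering of `S i`. -/

/-- `l` is a `p`-ordering of the finite set `S ⊆ ℤ`, as a list: it enumerates `S`
without repetition and each entry minimizes the `p`-adic valuation of the product of its
differences with the previously listed elements, among the remaining elements of `S`. -/
def IsPOrderingL (p : ℕ) (S : Finset ℤ) (l : List ℤ) : Prop :=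
  l.Nodup ∧ l.toFinset = S ∧
  ∀ (i : ℕ) (h : i < l.length), 0 < i → ∀ x ∈ S, x ∉ l.take i →
    padicValInt p (((l.take i).map (fun a => l.get ⟨i, h⟩ - a)).prod) ≤
      padicValInt p (((l.take i).map (fun a => x - a)).prod)

/-- At each step `t`, the element `l.get t` has minimal `p`-value among the next unchosen
elements of each of the sets `S i`, where the order on `S i` is the subsequence of `l`
consisting of elements of `S i`. -/
def HeadMinimal (p : ℕ) {m : ℕ} (S : Fin m → Finset ℤ) (l : List ℤ) : Prop :=
  ∀ (t : ℕ) (h : t < l.length), ∀ (i : Fin m) (x : ℤ),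
    ((l.filter (fun a => decide (a ∈ S i))).filter
        (fun a => decide (a ∉ l.take t))).head? = some x →
    padicValInt p (((l.take t).map (fun a => l.get ⟨t, h⟩ - a)).prod) ≤
      padicValInt p (((l.take t).map (fun a => x - a)).prod)

namespace List

variable {α : Type*}

theorem forall_take_get_iff_forall_eq_append_cons {l : List α} {Q : List α → α → Prop} :
    (∀ (t : ℕ) (h : t < l.length), Q (l.take t) (l.get ⟨t, h⟩)) ↔
      ∀ A y B, l = A ++ y :: B → Q A y := by
  constructor
  · rintro h A y B rfl
    simpa using h A.length (by simp)
  · intro h t ht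
    refine h _ _ (l.drop (t + 1)) ?_
    rw [get_eq_getElem, ← drop_eq_getElem_cons, take_append_drop]

theorem Nodup.filter_filter_notMem_append [DecidableEq α] {A B : List α} (h : (A ++ B).Nodup)
    (P : α → Bool) : ((A ++ B).filter P).filter (fun a => a ∉ A) = B.filter P := by
  have hAB := (nodup_append.mp h).2.2
  rw [filter_append, filter_append, filter_eq_nil_iff.mpr, nil_append, filter_eq_self.mpr]
  · intro b hb
    simpa using fun hbA => hAB b hbA b (mem_of_mem_filter hb) rfl
  · intro a ha
    simpa using mem_of_mem_filter ha

end List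

open List

def pValue (p : ℕ) (A : List ℤ) (x : ℤ) : ℕ :=
  padicValInt p (A.map (fun a => x - a)).prod

@[simp]
theorem pValue_nil (p : ℕ) (x : ℤ) : pValue p [] x = 0 := by
  simp [pValue]

theorem padicValInt_prod_map_filter {p : ℕ} [Fact p.Prime] {α : Type*} (P : α → Prop)
    [DecidablePred P] (f : α → ℤ) {L : List α} (hf : ∀ a ∈ L, f a ≠ 0)
    (hcop : ∀ a ∈ L, ¬ P a → ¬ (p : ℤ) ∣ f a) :
    padicValInt p (L.map f).prod = padicValInt p ((L.filter P).map f).prod := by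
  have hprime : Prime (p : ℤ) := Nat.prime_iff_prime_int.mp Fact.out
  have hne (M : List α) (hM : M ⊆ L) : (M.map f).prod ≠ 0 :=
    prod_ne_zero (by simpa using fun a ha => hf a (hM ha))
  have hrest : padicValInt p ((L.filter fun a => ¬ P a).map f).prod = 0 := by
    refine padicValInt.eq_zero_of_not_dvd (hprime.not_dvd_prod ?_)
    simp only [mem_map, mem_filter, decide_eq_true_eq, forall_exists_index, and_imp]
    rintro _ a ha hPa rfl
    exact hcop a ha hPa
  rw [← prod_map_filter_mul_prod_map_filter_not P f L,
    padicValInt.mul (hne _ (filter_sublist).subset) (hne _ (filter_sublist).subset), hrest,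
    add_zero]

theorem pValue_filter {p : ℕ} [Fact p.Prime] (T : Finset ℤ) {A : List ℤ} {x : ℤ} (hxA : x ∉ A)
    (hsep : ∀ a ∈ A, a ∉ T → ¬ (p : ℤ) ∣ x - a) :
    pValue p A x = pValue p (A.filter (· ∈ T)) x :=
  padicValInt_prod_map_filter (· ∈ T) _ (fun _ ha => sub_ne_zero.mpr fun h => hxA (h ▸ ha)) hsep

theorem isPOrderingL_iff {p : ℕ} {S : Finset ℤ} {l : List ℤ} :
    IsPOrderingL p S l ↔ l.Nodup ∧ l.toFinset = S ∧
      ∀ A y B, l = A ++ y :: B → ∀ x ∈ S, x ∉ A → pValue p A y ≤ pValue p A x := by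
  refine and_congr_right fun _ => and_congr_right fun _ => ?_
  rw [← forall_take_get_iff_forall_eq_append_cons]
  refine forall₂_congr fun t _ => ⟨fun h => ?_, fun h _ => h⟩
  rcases t.eq_zero_or_pos with rfl | ht0
  · simp
  · exact h ht0

theorem headMinimal_iff {p m : ℕ} {S : Fin m → Finset ℤ} {l : List ℤ} (hl : l.Nodup) :
    HeadMinimal p S l ↔ ∀ A y B, l = A ++ y :: B → ∀ i x,
      ((y :: B).filter (· ∈ S i)).head? = some x → pValue p A y ≤ pValue p A x := by
  refine (forall_take_get_iff_forall_eq_append_cons (Q := fun A y => ∀ i x,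
    ((l.filter (· ∈ S i)).filter (· ∉ A)).head? = some x → pValue p A y ≤ pValue p A x)).trans ?_
  refine forall₃_congr fun A y B => forall_congr' fun hAyB => ?_
  subst hAyB
  simp only [hl.filter_filter_notMem_append]

theorem not_dvd_sub_of_mem_of_notMem {p : ℕ} {ι : Type*} {S : ι → Finset ℤ}
    (hacross : ∀ i i', i ≠ i' → ∀ a ∈ S i, ∀ b ∈ S i', ¬ a ≡ b [ZMOD (p : ℤ)])
    {i : ι} {x a : ℤ} (hx : x ∈ S i) (ha : ∃ j, a ∈ S j) (hai : a ∉ S i) :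
    ¬ (p : ℤ) ∣ x - a := by
  obtain ⟨j, haj⟩ := ha
  exact fun hdvd =>
    hacross j i (by rintro rfl; exact hai haj) a haj x hx (Int.modEq_iff_dvd.mpr hdvd)

theorem IsPOrderingL.filter_mem {p : ℕ} [Fact p.Prime] {S T : Finset ℤ} {l : List ℤ}
    (hl : IsPOrderingL p S l) (hTS : T ⊆ S)
    (hsep : ∀ x ∈ T, ∀ a ∈ S, a ∉ T → ¬ (p : ℤ) ∣ x - a) :
    IsPOrderingL p T (l.filter (· ∈ T)) := by
  obtain ⟨hnd, hS, hmin⟩ := isPOrderingL_iff.mp hl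
  refine isPOrderingL_iff.mpr ⟨hnd.filter _, ?_, fun A' y B' hfil x hxT hxA' => ?_⟩
  · ext x
    simpa [← hS] using fun hx => hTS hx
  have hyl : y ∈ l.filter (· ∈ T) := hfil ▸ mem_append_right _ mem_cons_self
  obtain ⟨hy, hyT⟩ := mem_filter.mp hyl
  rw [decide_eq_true_eq] at hyT
  obtain ⟨A, B, rfl⟩ := append_of_mem hy
  have hyAB : y ∉ A ++ B := (nodup_cons.mp (nodup_middle.mp hnd)).1
  have hA' : A' = A.filter (· ∈ T) := by
    rw [filter_append, filter_cons_of_pos (by simpa using hyT)] at hfil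
    exact ((append_cons_inj_of_notMem (fun h => hyAB (mem_append_left _ (mem_of_mem_filter h)))
      (fun h => hyAB (mem_append_right _ (mem_of_mem_filter h)))).mp hfil).1.symm
  have hxA : x ∉ A := fun h => hxA' (hA' ▸ mem_filter.mpr ⟨h, by simpa using hxT⟩)
  have hsepA (z : ℤ) (hz : z ∈ T) : ∀ a ∈ A, a ∉ T → ¬ (p : ℤ) ∣ z - a :=
    fun a ha => hsep z hz a (by simp [← hS, ha])
  subst hA'
  calc pValue p (A.filter (· ∈ T)) y = pValue p A y :=
        (pValue_filter T (fun h => hyAB (mem_append_left _ h)) (hsepA y hyT)).symm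
    _ ≤ pValue p A x := hmin A y B rfl x (hTS hxT) hxA
    _ = pValue p (A.filter (· ∈ T)) x := pValue_filter T hxA (hsepA x hxT)

theorem IsPOrderingL.headMinimal {p m : ℕ} {S : Fin m → Finset ℤ} {U : Finset ℤ} {l : List ℤ}
    (hl : IsPOrderingL p U l) : HeadMinimal p S l := by
  obtain ⟨hnd, hU, hmin⟩ := isPOrderingL_iff.mp hl
  refine (headMinimal_iff hnd).mpr fun A y B hAyB i x hx => ?_
  have hxB : x ∈ y :: B := mem_of_mem_filter (mem_of_mem_head? hx)
  subst hAyB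
  exact hmin A y B rfl x (hU ▸ mem_toFinset.mpr (mem_append_right A hxB))
    fun hxA => (nodup_append.mp hnd).2.2 x hxA x hxB rfl

theorem isPOrderingL_of_filter_of_headMinimal {p : ℕ} [Fact p.Prime] {m : ℕ}
    {S : Fin m → Finset ℤ}
    (hacross : ∀ i i', i ≠ i' → ∀ a ∈ S i, ∀ b ∈ S i', ¬ a ≡ b [ZMOD (p : ℤ)])
    {l : List ℤ} (hnd : l.Nodup) (hS : l.toFinset = Finset.univ.biUnion S)
    (hfil : ∀ i, IsPOrderingL p (S i) (l.filter (· ∈ S i))) (hhead : HeadMinimal p S l) :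
    IsPOrderingL p (Finset.univ.biUnion S) l := by
  refine isPOrderingL_iff.mpr ⟨hnd, hS, fun A y B hAyB x hx hxA => ?_⟩
  have hheadAB := (headMinimal_iff hnd).mp hhead A y B hAyB
  subst hAyB
  obtain ⟨i, -, hxi⟩ := Finset.mem_biUnion.mp hx
  have hAU (a : ℤ) (ha : a ∈ A) : a ∈ Finset.univ.biUnion S :=
    hS ▸ mem_toFinset.mpr (mem_append_left _ ha)
  have hsepA (z : ℤ) (hz : z ∈ S i) : ∀ a ∈ A, a ∉ S i → ¬ (p : ℤ) ∣ z - a := fun a ha =>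
    not_dvd_sub_of_mem_of_notMem hacross hz (by simpa using hAU a ha)
  have hxl : x ∈ A ++ y :: B := mem_toFinset.mp (hS ▸ hx)
  have hxB : x ∈ (y :: B).filter (· ∈ S i) :=
    mem_filter.mpr ⟨(mem_append.mp hxl).resolve_left hxA, by simpa using hxi⟩
  obtain ⟨z, C, hzC⟩ := exists_cons_of_ne_nil (ne_nil_of_mem hxB)
  have hz : z ∈ (y :: B).filter (· ∈ S i) := hzC ▸ mem_cons_self
  obtain ⟨hzB, hzi⟩ := mem_filter.mp hz
  have hzA : z ∉ A := fun hzA => (nodup_append.mp hnd).2.2 z hzA z hzB rfl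
  have hfil_i := (isPOrderingL_iff.mp (hfil i)).2.2 (A.filter (· ∈ S i)) z C
    (by rw [filter_append, hzC]) x hxi (by simp [hxA])
  calc pValue p A y ≤ pValue p A z := hheadAB i z (by simp [hzC])
    _ = pValue p (A.filter (· ∈ S i)) z := pValue_filter _ hzA (hsepA z (by simpa using hzi))
    _ ≤ pValue p (A.filter (· ∈ S i)) x := hfil_i
    _ = pValue p A x := (pValue_filter _ hxA (hsepA x hxi)).symm

theorem pOrdering_merge_general (p : ℕ) (hp : p.Prime) (m : ℕ) (S : Fin m → Finset ℤ)
    (hacross : ∀ i i' : Fin m, i ≠ i' → ∀ a ∈ S i, ∀ b ∈ S i', ¬ a ≡ b [ZMOD (p : ℤ)]) :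
    (∀ l : List ℤ, l.Nodup → l.toFinset = Finset.univ.biUnion S →
      (IsPOrderingL p (Finset.univ.biUnion S) l ↔
        ((∀ i : Fin m, IsPOrderingL p (S i) (l.filter (fun a => decide (a ∈ S i)))) ∧
          HeadMinimal p S l))) ∧
    (∀ c : Fin m → List ℤ, (∀ i, IsPOrderingL p (S i) (c i)) →
      ∀ l : List ℤ, l.Nodup → l.toFinset = Finset.univ.biUnion S →
        (∀ i, l.filter (fun a => decide (a ∈ S i)) = c i) →
        HeadMinimal p S l →
        IsPOrderingL p (Finset.univ.biUnion S) l) := by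
  have := Fact.mk hp
  have hsep (i : Fin m) : ∀ x ∈ S i, ∀ a ∈ Finset.univ.biUnion S, a ∉ S i → ¬ (p : ℤ) ∣ x - a :=
    fun x hx a ha => not_dvd_sub_of_mem_of_notMem hacross hx (by simpa using ha)
  refine ⟨fun l hnd hS => ⟨fun hl => ⟨fun i => ?_, hl.headMinimal⟩, fun ⟨hfil, hhead⟩ =>
    isPOrderingL_of_filter_of_headMinimal hacross hnd hS hfil hhead⟩,
    fun c hc l hnd hS hfil hhead =>
      isPOrderingL_of_filter_of_headMinimal hacross hnd hS (fun i => hfil i ▸ hc i) hhead⟩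
  exact hl.filter_mem (Finset.subset_biUnion_of_mem S (Finset.mem_univ i)) (hsep i)

theorem pOrdering_merge (p : ℕ) (hp : p.Prime) (m : ℕ) (S : Fin m → Finset ℤ)
    (hdisj : ∀ i i' : Fin m, i ≠ i' → Disjoint (S i) (S i'))
    (hwithin : ∀ i : Fin m, ∀ a ∈ S i, ∀ b ∈ S i, a ≡ b [ZMOD (p : ℤ)])
    (hacross : ∀ i i' : Fin m, i ≠ i' → ∀ a ∈ S i, ∀ b ∈ S i', ¬ a ≡ b [ZMOD (p : ℤ)]) :
    (∀ l : List ℤ, l.Nodup → l.toFinset = Finset.univ.biUnion S →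
      (IsPOrderingL p (Finset.univ.biUnion S) l ↔
        ((∀ i : Fin m, IsPOrderingL p (S i) (l.filter (fun a => decide (a ∈ S i)))) ∧
          HeadMinimal p S l))) ∧
    (∀ c : Fin m → List ℤ, (∀ i, IsPOrderingL p (S i) (c i)) →
      ∀ l : List ℤ, l.Nodup → l.toFinset = Finset.univ.biUnion S →
        (∀ i, l.filter (fun a => decide (a ∈ S i)) = c i) →
        HeadMinimal p S l →
        IsPOrderingL p (Finset.univ.biUnion S) l) :=
  pOrdering_merge_general p hp m S hacross
end
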